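/- Let f : [0,∞) → (0,∞) be continuous, nonincreasing, and satisfy ∫₀^∞ f(s) ds = ∞. Then the inequality −Δv ≥ f(v) in ℝⁿ₊ admits no nonnegative solution v ∈ C²(ℝⁿ₊). -/

import Mathlib

open MeasureTheory Set Metric

noncomputable def pd {m : ℕ} (i : Fin m) (u : EuclideanSpace ℝ (Fin m) → ℝ)
    (x : EuclideanSpace ℝ (Fin m)) : ℝ :=
  fderiv ℝ u x (EuclideanSpace.single i 1)

noncomputable def lap {m : ℕ} (u : EuclideanSpace ℝ (Fin m) → ℝ)
    (x : EuclideanSpace ℝ (Fin m)) : ℝ :=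
  ∑ i, pd i (fun y => pd i u y) x

/-- The open upper half-space `ℝⁿ₊` in dimension `n+1`. -/
def upperHalf (n : ℕ) : Set (EuclideanSpace ℝ (Fin (n + 1))) :=
  {x | 0 < x (Fin.last n)}

/-!
Because `∫ f = ∞`, for every `b` there is a one-dimensional profile `ψ`, bounded above, with
`ψ 1 = 0`, `ψ 2 = b` and `-2ψ'' ≤ f(ψ)` wherever `ψ ≥ 0`. It is affine on `[1, 2]`; after that,
parabolas of curvature `f(h+1)/2` are glued in, each lifting the height from `h` to `h+1` at the
cost of `f(h+1)` in the squared slope, until the divergent series `∑ f(b+k+1)` has paid for the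
initial `b²` and a last parabola turns around below the next level.

If `v` were a nonnegative supersolution, `ψ(xₙ) - ε‖x‖² - v(x)` would attain its maximum over
`{xₙ ≥ 1} ∩ closedBall 0 R`. A positive maximum is interior (`ψ 1 ≤ 0` and `sup ψ ≤ ε R²` rule
out the boundary), and the second derivative test along the coordinate axes gives
`ψ'' - 2(n+1)ε ≤ Δv ≤ -f(v) ≤ -f(ψ)`, contradicting `-2ψ'' ≤ f(ψ)` once `4(n+1)ε < f(sup ψ)`.
Hence `v(2eₙ) ≥ b - 4ε ≥ b - f(0)` for every `b`.
-/

open Filter Topology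

structure HasRightSecondDeriv (ψ ψ' ψ'' : ℝ → ℝ) : Prop where
  hasDerivAt : ∀ t, HasDerivAt ψ (ψ' t) t
  hasDerivWithinAt_Ici : ∀ t, HasDerivWithinAt ψ' (ψ'' t) (Ici t) t

theorem ite_le_eq_right {α : Type*} {g₁ g₂ : ℝ → α} {a t : ℝ} (hval : g₁ a = g₂ a)
    (ht : a ≤ t) : (if t ≤ a then g₁ t else g₂ t) = g₂ t := by
  rcases ht.eq_or_lt with rfl | ht
  · simp [hval]
  · simp [not_le.2 ht]

theorem HasRightSecondDeriv.piecewise {ψ₁ ψ₁' ψ₁'' ψ₂ ψ₂' ψ₂'' : ℝ → ℝ} {a : ℝ}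
    (h₁ : HasRightSecondDeriv ψ₁ ψ₁' ψ₁'') (h₂ : HasRightSecondDeriv ψ₂ ψ₂' ψ₂'')
    (hval : ψ₁ a = ψ₂ a) (hder : ψ₁' a = ψ₂' a) :
    HasRightSecondDeriv (fun t => if t ≤ a then ψ₁ t else ψ₂ t)
      (fun t => if t ≤ a then ψ₁' t else ψ₂' t) (fun t => if t < a then ψ₁'' t else ψ₂'' t) where
  hasDerivAt t := by
    rcases lt_or_ge t a with ht | ht
    · rw [if_pos ht.le]
      refine (h₁.hasDerivAt t).congr_of_eventuallyEq ?_
      filter_upwards [eventually_lt_nhds ht] with σ hσ using if_pos hσ.le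
    rw [ite_le_eq_right hder ht]
    have hIci : HasDerivWithinAt (fun σ => if σ ≤ a then ψ₁ σ else ψ₂ σ) (ψ₂' t) (Ici t) t :=
      (h₂.hasDerivAt t).hasDerivWithinAt.congr (fun σ hσ => ite_le_eq_right hval (ht.trans hσ))
        (ite_le_eq_right hval ht)
    rcases ht.eq_or_lt with rfl | ht
    · have hIic : HasDerivWithinAt (fun σ => if σ ≤ a then ψ₁ σ else ψ₂ σ) (ψ₂' a) (Iic a) a :=
        hder ▸ (h₁.hasDerivAt a).hasDerivWithinAt.congr (fun σ hσ => if_pos hσ) (if_pos le_rfl)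
      simpa [Iic_union_Ici, hasDerivWithinAt_univ] using hIic.union hIci
    · refine (h₂.hasDerivAt t).congr_of_eventuallyEq ?_
      filter_upwards [eventually_gt_nhds ht] with σ hσ using ite_le_eq_right hval hσ.le
  hasDerivWithinAt_Ici t := by
    rcases lt_or_ge t a with ht | ht
    · rw [if_pos ht]
      refine (h₁.hasDerivWithinAt_Ici t).congr_of_eventuallyEq ?_ (if_pos ht.le)
      filter_upwards [eventually_nhdsWithin_of_eventually_nhds (eventually_lt_nhds ht)]
        with σ hσ using if_pos hσ.le
    · rw [if_neg (not_lt.2 ht)]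
      exact (h₂.hasDerivWithinAt_Ici t).congr
        (fun σ hσ => ite_le_eq_right hder (ht.trans hσ)) (ite_le_eq_right hder ht)

noncomputable def parabola (t₀ h s d t : ℝ) : ℝ := h + s * (t - t₀) - d / 2 * (t - t₀) ^ 2

theorem hasRightSecondDeriv_parabola (t₀ h s d : ℝ) :
    HasRightSecondDeriv (parabola t₀ h s d) (fun t => s - d * (t - t₀)) (fun _ => -d) where
  hasDerivAt t := by
    have hlin : HasDerivAt (fun t => t - t₀) 1 t := (hasDerivAt_id' t).sub_const t₀
    exact (((hlin.const_mul s).const_add h).sub ((hlin.pow 2).const_mul (d / 2))).congr_deriv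
      (by norm_num; ring)
  hasDerivWithinAt_Ici t := by
    have := ((hasDerivAt_id t).sub_const t₀).const_mul d |>.const_sub s
    simpa using this.hasDerivWithinAt

theorem parabola_le_add_one {t₀ h s d t : ℝ} (hd : 0 < d) (hs : s ^ 2 ≤ 2 * d) :
    parabola t₀ h s d t ≤ h + 1 := by
  unfold parabola
  nlinarith [sq_nonneg (d * (t - t₀) - s)]

theorem parabola_le_parabola {t₀ t₁ h s d t : ℝ} (hd : 0 ≤ d) (hslope : d * (t₁ - t₀) ≤ s)
    (ht : t ∈ Icc t₀ t₁) : parabola t₀ h s d t ≤ parabola t₀ h s d t₁ := by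
  unfold parabola
  have hfactor : 0 ≤ s - d / 2 * ((t₁ - t₀) + (t - t₀)) := by
    nlinarith [mul_le_mul_of_nonneg_left (sub_le_sub_right ht.2 t₀) hd]
  nlinarith [mul_nonneg (sub_nonneg.2 ht.2) hfactor]

/-- The factor `2` in `subsolution` is the slack consumed by the penalty `ε‖x‖²` in
`barrier_sub_le_of_supersolution`. -/
structure IsBarrier (f : ℝ → ℝ) (t₀ : ℝ) (ψ ψ' ψ'' : ℝ → ℝ) : Prop
    extends HasRightSecondDeriv ψ ψ' ψ'' where
  bddAbove : BddAbove (ψ '' Ici t₀)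
  subsolution : ∀ t, t₀ ≤ t → 0 ≤ ψ t → -(2 * ψ'' t) ≤ f (ψ t)

theorem HasRightSecondDeriv.isBarrier_piecewise {f ψ₁ ψ₁' ψ₁'' ψ₂ ψ₂' ψ₂'' : ℝ → ℝ}
    {t₀ t₁ : ℝ} (h₁ : HasRightSecondDeriv ψ₁ ψ₁' ψ₁'') (h₂ : IsBarrier f t₁ ψ₂ ψ₂' ψ₂'')
    (hval : ψ₁ t₁ = ψ₂ t₁) (hder : ψ₁' t₁ = ψ₂' t₁) (hbdd : BddAbove (ψ₁ '' Icc t₀ t₁))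
    (hsub : ∀ t ∈ Ico t₀ t₁, 0 ≤ ψ₁ t → -(2 * ψ₁'' t) ≤ f (ψ₁ t)) :
    IsBarrier f t₀ (fun t => if t ≤ t₁ then ψ₁ t else ψ₂ t)
      (fun t => if t ≤ t₁ then ψ₁' t else ψ₂' t)
      (fun t => if t < t₁ then ψ₁'' t else ψ₂'' t) where
  toHasRightSecondDeriv := h₁.piecewise h₂.toHasRightSecondDeriv hval hder
  bddAbove := by
    refine (hbdd.union h₂.bddAbove).mono ?_
    rintro _ ⟨t, ht, rfl⟩
    rcases le_or_gt t t₁ with htt | htt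
    · exact .inl ⟨t, ⟨ht, htt⟩, (if_pos htt).symm⟩
    · exact .inr ⟨t, htt.le, (if_neg (not_le.2 htt)).symm⟩
  subsolution t ht hψ := by
    rcases lt_or_ge t t₁ with htt | htt
    · simp only [if_pos htt, if_pos htt.le] at hψ ⊢
      exact hsub t ⟨ht, htt⟩ hψ
    · simp only [ite_le_eq_right hval htt, if_neg (not_lt.2 htt)] at hψ ⊢
      exact h₂.subsolution t htt hψ

def HasBarrier (f : ℝ → ℝ) (t₀ h s : ℝ) : Prop :=
  ∃ ψ ψ' ψ'', IsBarrier f t₀ ψ ψ' ψ'' ∧ ψ t₀ = h ∧ ψ' t₀ = s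

section Construction

variable {f : ℝ → ℝ} (hfpos : ∀ s ∈ Ici (0 : ℝ), 0 < f s) (hf : AntitoneOn f (Ici 0))

include hf in
theorem subsolution_of_le_add_one {h x : ℝ} (hx : 0 ≤ x) (hxh : x ≤ h + 1) :
    -(2 * -(f (h + 1) / 2)) ≤ f x := by
  linarith [hf (mem_Ici.2 hx) (mem_Ici.2 (hx.trans hxh)) hxh]

include hfpos hf

theorem hasBarrier_of_sq_le {t₀ h s : ℝ} (hh : 0 ≤ h) (hs : s ^ 2 ≤ f (h + 1)) :
    HasBarrier f t₀ h s := by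
  have hle : ∀ t, parabola t₀ h s (f (h + 1) / 2) t ≤ h + 1 := fun t =>
    parabola_le_add_one (half_pos (hfpos _ (by simp; linarith))) (by linarith)
  refine ⟨_, _, _, { toHasRightSecondDeriv := hasRightSecondDeriv_parabola t₀ h s _
                     bddAbove := ⟨h + 1, by rintro _ ⟨t, -, rfl⟩; exact hle t⟩
                     subsolution := fun t _ hψ => subsolution_of_le_add_one hf hψ (hle t) },
    by simp [parabola], by simp⟩

theorem HasBarrier.of_add_one {t₀ t₁ h s s₁ : ℝ} (hh : 0 ≤ h) (hs : 0 ≤ s) (hs₁ : 0 ≤ s₁)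
    (hss₁ : s ^ 2 = s₁ ^ 2 + f (h + 1)) (ht₁ : f (h + 1) / 2 * (t₁ - t₀) = s - s₁)
    (hψ : HasBarrier f t₁ (h + 1) s₁) : HasBarrier f t₀ h s := by
  obtain ⟨ψ, ψ', ψ'', hψ, hψt₁, hψ't₁⟩ := hψ
  set d := f (h + 1) / 2 with hd_def
  have hd : 0 < d := half_pos (hfpos _ (by simp; linarith))
  rw [show f (h + 1) = 2 * d by rw [hd_def]; ring] at hss₁
  have hs₁s : s₁ ≤ s := by nlinarith
  have ht₀₁ : t₀ ≤ t₁ := by nlinarith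
  -- with `τ = t₁ - t₀ = (s - s₁) / d`, the rise is `s τ - d τ² / 2 = (s² - s₁²) / (2d) = 1`
  have hP₁ : parabola t₀ h s d t₁ = h + 1 := by
    have : d * (s * (t₁ - t₀) - d / 2 * (t₁ - t₀) ^ 2) = d * 1 := by
      linear_combination (s - (d * (t₁ - t₀) + s - s₁) / 2) * ht₁ + hss₁ / 2
    unfold parabola
    linarith [mul_left_cancel₀ hd.ne' this]
  have hle : ∀ t ∈ Icc t₀ t₁, parabola t₀ h s d t ≤ h + 1 := fun t ht =>
    hP₁ ▸ parabola_le_parabola hd.le (by linarith) ht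
  refine ⟨_, _, _, (hasRightSecondDeriv_parabola t₀ h s d).isBarrier_piecewise hψ
    (hP₁.trans hψt₁.symm) (by linarith) ⟨h + 1, ?_⟩
    (fun t ht hP => subsolution_of_le_add_one hf hP (hle t (Ico_subset_Icc_self ht))), ?_, ?_⟩
  · rintro _ ⟨t, ht, rfl⟩
    exact hle t ht
  · simp [ht₀₁, parabola]
  · simp [ht₀₁]

theorem hasBarrier_of_sq_le_sum {N : ℕ} {t₀ h s : ℝ} (hh : 0 ≤ h) (hs : 0 ≤ s)
    (hsum : s ^ 2 ≤ ∑ k ∈ Finset.range N, f (h + k + 1)) : HasBarrier f t₀ h s := by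
  induction N generalizing t₀ h s with
  | zero =>
    have hpos := hfpos (h + 1) (by simp; linarith)
    rw [Finset.sum_range_zero] at hsum
    exact hasBarrier_of_sq_le hfpos hf hh (by linarith)
  | succ N ih =>
    by_cases hs2 : s ^ 2 ≤ f (h + 1)
    · exact hasBarrier_of_sq_le hfpos hf hh hs2
    have hd : 0 < f (h + 1) / 2 := half_pos (hfpos _ (by simp; linarith))
    set s₁ := √(s ^ 2 - f (h + 1))
    have hss₁ : s ^ 2 = s₁ ^ 2 + f (h + 1) := by rw [Real.sq_sqrt (by linarith)]; ring
    refine HasBarrier.of_add_one hfpos hf (t₁ := t₀ + (s - s₁) / (f (h + 1) / 2)) hh hs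
      (Real.sqrt_nonneg _) hss₁ (by rw [add_sub_cancel_left, mul_div_cancel₀ _ hd.ne'])
      (ih (by linarith) (Real.sqrt_nonneg _) ?_)
    have hshift : ∀ k : ℕ, f (h + ((k + 1 : ℕ) : ℝ) + 1) = f (h + 1 + k + 1) := fun k => by
      push_cast; ring_nf
    rw [Finset.sum_range_succ'] at hsum
    simp only [hshift, Nat.cast_zero, add_zero] at hsum
    linarith

theorem hasBarrier_of_not_summable (hdiv : ¬ Summable fun k : ℕ => f k) (t₀ : ℝ) {s : ℝ}
    (hs : 0 ≤ s) (h : ℕ) : HasBarrier f t₀ h s := by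
  have htail : ¬ Summable fun k : ℕ => f (h + k + 1) := by
    rw [← summable_nat_add_iff (h + 1)] at hdiv
    refine fun htail => hdiv (htail.congr fun k => ?_)
    push_cast
    ring_nf
  have hpos : ∀ k : ℕ, 0 ≤ f (h + k + 1) := fun k => (hfpos _ (mem_Ici.2 (by positivity))).le
  obtain ⟨N, hN⟩ := ((not_summable_iff_tendsto_nat_atTop_of_nonneg hpos).1 htail
    |>.eventually_ge_atTop (s ^ 2)).exists
  exact hasBarrier_of_sq_le_sum hfpos hf (Nat.cast_nonneg h) hs hN

theorem exists_isBarrier_of_not_summable (hdiv : ¬ Summable fun k : ℕ => f k) (b : ℕ) :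
    ∃ ψ ψ' ψ'', IsBarrier f 1 ψ ψ' ψ'' ∧ ψ 1 = 0 ∧ ψ 2 = b := by
  obtain ⟨ψ, ψ', ψ'', hψ, hψ2, hψ'2⟩ :=
    hasBarrier_of_not_summable hfpos hf hdiv 2 (Nat.cast_nonneg b) b
  refine ⟨_, _, _, (hasRightSecondDeriv_parabola 1 0 b 0).isBarrier_piecewise hψ
    (by norm_num [parabola, hψ2]) (by simp [hψ'2]) ?_ fun t _ hψt => ?_, ?_, ?_⟩
  · exact ⟨parabola 1 0 b 0 2, by
      rintro _ ⟨t, ht, rfl⟩; exact parabola_le_parabola le_rfl (by simp) ht⟩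
  · simpa using (hfpos _ hψt).le
  · norm_num [parabola]
  · norm_num [parabola]

end Construction

theorem IsLocalMax.le_zero_of_hasDerivWithinAt_Ici {g g' : ℝ → ℝ} {a α : ℝ}
    (hmax : IsLocalMax g a) (hg : ∀ᶠ σ in 𝓝 a, HasDerivAt g (g' σ) σ)
    (hg' : HasDerivWithinAt g' α (Ici a) a) : α ≤ 0 := by
  by_contra! hα
  have hg'a : g' a = 0 := hmax.hasDerivAt_eq_zero hg.self_of_nhds
  have hpos : ∀ᶠ σ in 𝓝[>] a, 0 < g' σ := by
    have hslope := (hasDerivWithinAt_iff_tendsto_slope.1 hg'.Ioi_of_Ici).eventually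
      (eventually_gt_nhds hα)
    rw [sdiff_singleton_eq_self (self_notMem_Ioi (a := a))] at hslope
    filter_upwards [hslope, self_mem_nhdsWithin] with σ hσ (hσa : a < σ)
    rw [slope_def_field, hg'a, sub_zero] at hσ
    exact (div_pos_iff_of_pos_right (sub_pos.2 hσa)).1 hσ
  obtain ⟨b, hab : a < b, hb⟩ := mem_nhdsGT_iff_exists_Ioo_subset.1
    (hpos.and (nhdsWithin_le_nhds (hmax.and hg)))
  obtain ⟨c, hac, hcb⟩ := exists_between hab
  have hsub : Ioc a c ⊆ Ioo a b := fun σ hσ => ⟨hσ.1, hσ.2.trans_lt hcb⟩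
  have hcont : ContinuousOn g (Icc a c) := by
    intro σ hσ
    rcases hσ.1.eq_or_lt with rfl | hσa
    · exact hg.self_of_nhds.continuousAt.continuousWithinAt
    · exact (hb (hsub ⟨hσa, hσ.2⟩)).2.2.continuousAt.continuousWithinAt
  obtain ⟨d, hd, hd_slope⟩ := exists_hasDerivAt_eq_slope g g' hac hcont
    (fun σ hσ => (hb (hsub (Ioo_subset_Ioc_self hσ))).2.2)
  have hgc : g c ≤ g a := (hb (hsub ⟨hac, le_rfl⟩)).2.1
  have hslope : 0 < (g c - g a) / (c - a) := hd_slope ▸ (hb (hsub (Ioo_subset_Ioc_self hd))).1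
  linarith [(div_pos_iff_of_pos_right (sub_pos.2 hac)).1 hslope]

section Lines

variable {E : Type*} [NormedAddCommGroup E] [NormedSpace ℝ E]

theorem hasDerivAt_line (y e : E) (σ : ℝ) : HasDerivAt (fun σ : ℝ => y + σ • e) e σ := by
  simpa using ((hasDerivAt_id σ).smul_const e).const_add y

theorem ContDiffOn.eventually_hasDerivAt_line {u : E → ℝ} {U : Set E} (hU : IsOpen U)
    (hu : ContDiffOn ℝ 2 u U) {y : E} (hy : y ∈ U) (e : E) :
    ∀ᶠ σ in 𝓝 (0 : ℝ), HasDerivAt (fun σ => u (y + σ • e)) (fderiv ℝ u (y + σ • e) e) σ := by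
  have hmem : ∀ᶠ σ in 𝓝 (0 : ℝ), y + σ • e ∈ U :=
    (hasDerivAt_line y e 0).continuousAt.preimage_mem_nhds (by simpa using hU.mem_nhds hy)
  filter_upwards [hmem] with σ hσ
  exact ((hu.differentiableOn (by norm_num)).differentiableAt
    (hU.mem_nhds hσ)).hasFDerivAt.comp_hasDerivAt σ (hasDerivAt_line y e σ)

theorem ContDiffOn.hasDerivAt_fderiv_line {u : E → ℝ} {U : Set E} (hU : IsOpen U)
    (hu : ContDiffOn ℝ 2 u U) {y : E} (hy : y ∈ U) (e : E) :
    HasDerivAt (fun σ : ℝ => fderiv ℝ u (y + σ • e) e)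
      (fderiv ℝ (fun x => fderiv ℝ u x e) y e) 0 := by
  have hd : DifferentiableAt ℝ (fun x => fderiv ℝ u x e) y :=
    (((hu.fderiv_of_isOpen (m := 1) hU (by norm_num)).differentiableOn (by norm_num))
      |>.differentiableAt (hU.mem_nhds hy)).clm_apply (differentiableAt_const e)
  have hd' : HasFDerivAt (fun x => fderiv ℝ u x e) (fderiv ℝ (fun x => fderiv ℝ u x e) y)
      (y + (0 : ℝ) • e) := by simpa using hd.hasFDerivAt
  exact hd'.comp_hasDerivAt (0 : ℝ) (hasDerivAt_line y e 0)

theorem le_fderiv_fderiv_of_isLocalMax {u : E → ℝ} {U : Set E} (hU : IsOpen U)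
    (hu : ContDiffOn ℝ 2 u U) {y : E} (hy : y ∈ U) (e : E) {φ φ' : ℝ → ℝ} {α : ℝ}
    (hφ : ∀ σ, HasDerivAt φ (φ' σ) σ) (hφ' : HasDerivWithinAt φ' α (Ici 0) 0)
    (hmax : IsLocalMax (fun σ => φ σ - u (y + σ • e)) 0) :
    α ≤ fderiv ℝ (fun x => fderiv ℝ u x e) y e := by
  have := hmax.le_zero_of_hasDerivWithinAt_Ici
    ((hu.eventually_hasDerivAt_line hU hy e).mono fun σ hσ => (hφ σ).sub hσ)
    (hφ'.sub (hu.hasDerivAt_fderiv_line hU hy e).hasDerivWithinAt)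
  linarith

end Lines

open RealInnerProductSpace in
theorem sq_mul_sub_le_fderiv_fderiv_of_isLocalMax {E : Type*} [NormedAddCommGroup E]
    [InnerProductSpace ℝ E] {u : E → ℝ} {U : Set E} (hU : IsOpen U) (hu : ContDiffOn ℝ 2 u U)
    {y : E} (hy : y ∈ U) {ψ ψ' ψ'' : ℝ → ℝ} (hψ : HasRightSecondDeriv ψ ψ' ψ'')
    (ℓ : E →L[ℝ] ℝ) (ε : ℝ) (hmax : IsLocalMax (fun x => ψ (ℓ x) - ε * ‖x‖ ^ 2 - u x) y)
    {e : E} (he : 0 ≤ ℓ e) :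
    ℓ e ^ 2 * ψ'' (ℓ y) - 2 * ε * ‖e‖ ^ 2 ≤ fderiv ℝ (fun x => fderiv ℝ u x e) y e := by
  have haff : ∀ σ : ℝ, HasDerivAt (fun σ => ℓ y + σ * ℓ e) (ℓ e) σ := fun σ => by
    simpa using ((hasDerivAt_id σ).mul_const (ℓ e)).const_add (ℓ y)
  refine le_fderiv_fderiv_of_isLocalMax hU hu hy e
    (φ := fun σ => ψ (ℓ y + σ * ℓ e) - ε * ‖y + σ • e‖ ^ 2)
    (φ' := fun σ => ℓ e * ψ' (ℓ y + σ * ℓ e) - ε * (2 * ⟪y + σ • e, e⟫))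
    (fun σ => ?_) ?_ ?_
  · exact (((hψ.hasDerivAt _).comp σ (haff σ)).sub
      ((hasDerivAt_line y e σ).norm_sq.const_mul ε)).congr_deriv (by ring)
  · have hψ' : HasDerivWithinAt ψ' (ψ'' (ℓ y)) (Ici (ℓ y + 0 * ℓ e)) (ℓ y + 0 * ℓ e) := by
      simpa using hψ.hasDerivWithinAt_Ici (ℓ y)
    -- `ℓ e ≥ 0`: along the ray `σ ≥ 0`, `ℓ` moves to the right, where `ψ''` is a derivative
    have hcomp := hψ'.comp (0 : ℝ) ((haff 0).hasDerivWithinAt (s := Ici 0)) fun σ hσ => by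
      simp only [mem_Ici] at hσ ⊢; nlinarith
    have hinner := ((hasDerivAt_line y e 0).inner ℝ (hasDerivAt_const (0 : ℝ) e)).const_mul 2
      |>.const_mul ε
    exact ((hcomp.const_mul (ℓ e)).sub hinner.hasDerivWithinAt).congr_deriv (by simp; ring)
  · have hmax' : IsLocalMax (fun x => ψ (ℓ x) - ε * ‖x‖ ^ 2 - u x) (y + (0 : ℝ) • e) := by
      simpa using hmax
    convert hmax'.comp_continuous (g := fun σ : ℝ => y + σ • e)
      (hasDerivAt_line y e 0).continuousAt using 1
    funext σ
    simp

theorem sub_le_lap_of_isLocalMax {m : ℕ} {v : EuclideanSpace ℝ (Fin m) → ℝ}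
    {U : Set (EuclideanSpace ℝ (Fin m))} (hU : IsOpen U) (hv : ContDiffOn ℝ 2 v U) {y}
    (hy : y ∈ U) {ψ ψ' ψ'' : ℝ → ℝ} (hψ : HasRightSecondDeriv ψ ψ' ψ'') (j : Fin m) (ε : ℝ)
    (hmax : IsLocalMax (fun x => ψ (x j) - ε * ‖x‖ ^ 2 - v x) y) :
    ψ'' (y j) - 2 * m * ε ≤ lap v y := by
  have key : ∀ i, (if j = i then ψ'' (y j) else 0) - 2 * ε ≤ pd i (fun x => pd i v x) y := by
    intro i
    have := sq_mul_sub_le_fderiv_fderiv_of_isLocalMax hU hv hy hψ (EuclideanSpace.proj j) ε hmax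
      (e := EuclideanSpace.single i 1) (by simp [PiLp.single_apply]; split_ifs <;> norm_num)
    calc (if j = i then ψ'' (y j) else 0) - 2 * ε = _ := by simp
      _ ≤ _ := this
  calc ψ'' (y j) - 2 * m * ε = ∑ i, ((if j = i then ψ'' (y j) else 0) - 2 * ε) := by
        simp [Finset.sum_sub_distrib]; ring
    _ ≤ lap v y := Finset.sum_le_sum fun i _ => key i

theorem isOpen_upperHalf (n : ℕ) : IsOpen (upperHalf n) :=
  isOpen_lt continuous_const (PiLp.continuous_apply _ _ _)

section Comparison

variable {n : ℕ} {f : ℝ → ℝ} {v : EuclideanSpace ℝ (Fin (n + 1)) → ℝ}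
  {ψ ψ' ψ'' : ℝ → ℝ} {a M ε : ℝ}

theorem barrier_sub_nonpos_of_isLocalMax (hf : AntitoneOn f (Ici 0))
    (hv : ContDiffOn ℝ 2 v (upperHalf n)) (hv0 : ∀ x ∈ upperHalf n, 0 ≤ v x)
    (hlap : ∀ x ∈ upperHalf n, f (v x) ≤ -lap v x) (hψ : IsBarrier f a ψ ψ' ψ'')
    (hM : ∀ t, a ≤ t → ψ t ≤ M) (hε : 0 ≤ ε) (hεM : 4 * (n + 1) * ε < f M)
    {y : EuclideanSpace ℝ (Fin (n + 1))} (hy : y ∈ upperHalf n) (hya : a ≤ y (Fin.last n))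
    (hmax : IsLocalMax (fun x => ψ (x (Fin.last n)) - ε * ‖x‖ ^ 2 - v x) y) :
    ψ (y (Fin.last n)) - ε * ‖y‖ ^ 2 - v y ≤ 0 := by
  by_contra! hwy
  have hvy := hv0 y hy
  have hψy : v y ≤ ψ (y (Fin.last n)) := by nlinarith [sq_nonneg ‖y‖]
  have hΔ := sub_le_lap_of_isLocalMax (isOpen_upperHalf n) hv hy
    hψ.toHasRightSecondDeriv (Fin.last n) ε hmax
  have hsub := hψ.subsolution _ hya (hvy.trans hψy)
  have hfψ := hf hvy (hvy.trans hψy) hψy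
  have hfM := hf (hvy.trans hψy) ((hvy.trans hψy).trans (hM _ hya)) (hM _ hya)
  push_cast at hΔ
  linarith [hlap y hy]

theorem barrier_sub_le_of_supersolution (hf : AntitoneOn f (Ici 0))
    (hv : ContDiffOn ℝ 2 v (upperHalf n)) (hv0 : ∀ x ∈ upperHalf n, 0 ≤ v x)
    (hlap : ∀ x ∈ upperHalf n, f (v x) ≤ -lap v x) (ha : 0 < a) (hψ : IsBarrier f a ψ ψ' ψ'')
    (hψa : ψ a ≤ 0) (hM : ∀ t, a ≤ t → ψ t ≤ M) (hε : 0 < ε) (hεM : 4 * (n + 1) * ε < f M)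
    {z : EuclideanSpace ℝ (Fin (n + 1))} (hz : a ≤ z (Fin.last n)) :
    ψ (z (Fin.last n)) - ε * ‖z‖ ^ 2 ≤ v z := by
  set w := fun x : EuclideanSpace ℝ (Fin (n + 1)) => ψ (x (Fin.last n)) - ε * ‖x‖ ^ 2 - v x
  have hlast : Continuous fun x : EuclideanSpace ℝ (Fin (n + 1)) => x (Fin.last n) :=
    PiLp.continuous_apply _ _ _
  obtain ⟨R, hzR, hMR⟩ := ((eventually_ge_atTop ‖z‖).and
    (((tendsto_pow_atTop two_ne_zero).const_mul_atTop hε).eventually_ge_atTop M)).exists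
  set K := {x : EuclideanSpace ℝ (Fin (n + 1)) | a ≤ x (Fin.last n)} ∩ closedBall 0 R
  have hKU : K ⊆ upperHalf n := fun x hx => ha.trans_le hx.1
  have hK : IsCompact K :=
    (isCompact_closedBall 0 R).inter_left (isClosed_le continuous_const hlast)
  have hψc : Continuous ψ := continuous_iff_continuousAt.2 fun t => (hψ.hasDerivAt t).continuousAt
  have hwc : ContinuousOn w K := (((hψc.comp hlast).sub (continuous_const.mul
    (continuous_norm.pow 2))).continuousOn).sub (hv.continuousOn.mono hKU)
  have hzK : z ∈ K := ⟨hz, mem_closedBall_zero_iff.2 hzR⟩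
  obtain ⟨y, hyK, hymax⟩ := hK.exists_isMaxOn ⟨z, hzK⟩ hwc
  suffices hwy : w y ≤ 0 by
    have hwz : w z ≤ w y := hymax hzK
    simp only [w] at hwz hwy
    linarith
  by_contra! hwy
  have hvy := hv0 y (hKU hyK)
  have hya : a < y (Fin.last n) := hyK.1.lt_of_ne fun h => by
    simp only [w, ← h] at hwy; nlinarith [sq_nonneg ‖y‖]
  have hyR : ‖y‖ < R := (mem_closedBall_zero_iff.1 hyK.2).lt_of_ne fun h => by
    simp only [w, h] at hwy; linarith [hM _ hyK.1]
  have hloc : IsLocalMax w y := by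
    filter_upwards [(isOpen_lt continuous_const hlast).mem_nhds hya,
      isOpen_ball.mem_nhds (mem_ball_zero_iff.2 hyR)] with x hxa hxR
    exact hymax ⟨hxa.le, ball_subset_closedBall hxR⟩
  exact hwy.not_ge (barrier_sub_nonpos_of_isLocalMax hf hv hv0 hlap hψ hM hε.le hεM
    (hKU hyK) hyK.1 hloc)

end Comparison

theorem no_supersolution_halfspace_of_nonintegrable_general (n : ℕ) (f : ℝ → ℝ)
    (hfpos : ∀ s ∈ Ici (0 : ℝ), 0 < f s)
    (hfmono : ∀ s t : ℝ, 0 ≤ s → s ≤ t → f t ≤ f s)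
    (hfint : ¬ IntegrableOn f (Ioi 0)) :
    ¬ ∃ v : EuclideanSpace ℝ (Fin (n + 1)) → ℝ,
      ContDiffOn ℝ 2 v (upperHalf n) ∧
      (∀ x ∈ upperHalf n, 0 ≤ v x) ∧
      (∀ x ∈ upperHalf n, f (v x) ≤ -lap v x) := by
  rintro ⟨v, hv, hv0, hlap⟩
  have hf : AntitoneOn f (Ici 0) := fun s hs t _ hst => hfmono s t hs hst
  have hdiv : ¬ Summable fun k : ℕ => f k := fun hsum =>
    hfint (hf.integrableOn_Ioi_zero_of_summable hsum fun t ht => (hfpos t (mem_Ici.2 ht.le)).le)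
  obtain ⟨b, hb⟩ := exists_nat_gt (v (EuclideanSpace.single (Fin.last n) 2) + f 0)
  obtain ⟨ψ, ψ', ψ'', hψ, hψ1, hψ2⟩ := exists_isBarrier_of_not_summable hfpos hf hdiv b
  obtain ⟨M, hM⟩ := hψ.bddAbove
  set ε := f (max M 0) / (8 * (n + 1)) with hε_def
  have hfM := hfpos (max M 0) (le_max_right M 0)
  have hε : 0 < ε := by positivity
  have hεM : 4 * (n + 1) * ε = f (max M 0) / 2 := by rw [hε_def]; field_simp; ring
  have hcmp := barrier_sub_le_of_supersolution hf hv hv0 hlap one_pos hψ hψ1.le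
    (fun t ht => (hM ⟨t, ht, rfl⟩).trans (le_max_left M 0)) hε (by linarith)
    (z := EuclideanSpace.single (Fin.last n) 2) (by simp)
  have hf0 := hf (le_refl (0 : ℝ)) (le_max_right M 0) (le_max_right M 0)
  norm_num [hψ2] at hcmp
  nlinarith

/-- If `f : [0,∞) → (0,∞)` is continuous, nonincreasing, with `∫_0^∞ f(s) ds = ∞`, then
`-Δv ≥ f(v)` in `ℝⁿ₊` admits no nonnegative solution `v ∈ C²(ℝⁿ₊)`. -/
theorem no_supersolution_halfspace_of_nonintegrable (n : ℕ) (f : ℝ → ℝ)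
    (hfcont : ContinuousOn f (Ici 0))
    (hfpos : ∀ s ∈ Ici (0 : ℝ), 0 < f s)
    (hfmono : ∀ s t : ℝ, 0 ≤ s → s ≤ t → f t ≤ f s)
    (hfint : ¬ IntegrableOn f (Ioi 0)) :
    ¬ ∃ v : EuclideanSpace ℝ (Fin (n + 1)) → ℝ,
      ContDiffOn ℝ 2 v (upperHalf n) ∧
      (∀ x ∈ upperHalf n, 0 ≤ v x) ∧
      (∀ x ∈ upperHalf n, f (v x) ≤ -lap v x) :=
  no_supersolution_halfspace_of_nonintegrable_general n f hfpos hfmono hfint
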